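/- Let M be the single-qubit measurement channel in the computational basis, M(ρ) = P₀ρP₀ + P₁ρP₁ where P₀, P₁ are the projections onto |0⟩ and |1⟩. Then ‖I − M^{⊗n}‖_◇ = 2(2ⁿ − 1)/2ⁿ, where I is the identity channel on n qubits. -/

import Mathlib

open scoped BigOperators Matrix ComplexOrder

/-- The trace norm `‖X‖₁ = Tr √(X† X)`. -/
noncomputable def traceNorm {m n : Type*} [Fintype m] [Fintype n] [DecidableEq n]
    (X : Matrix m n ℂ) : ℝ :=
  (((Matrix.isHermitian_conjTranspose_mul_self X).eigenvectorUnitary : Matrix n n ℂ) *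
    Matrix.diagonal (((↑) : ℝ → ℂ) ∘ (Real.sqrt ·) ∘
      (Matrix.isHermitian_conjTranspose_mul_self X).eigenvalues) *
    (star (Matrix.isHermitian_conjTranspose_mul_self X).eigenvectorUnitary : Matrix n n ℂ)).trace.re

/-- Extension `I_E ⊗ Φ` of a superoperator by an ancilla `E`. -/
def tensorExt {E n m : Type*} (Φ : Matrix n n ℂ → Matrix m m ℂ)
    (X : Matrix (E × n) (E × n) ℂ) : Matrix (E × m) (E × m) ℂ :=
  Matrix.of fun p q => Φ (Matrix.of fun a b => X (p.1, a) (q.1, b)) p.2 q.2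

/-- The diamond norm. -/
noncomputable def diamondNorm {n m : Type*} [Fintype n] [DecidableEq n] [Fintype m]
    [DecidableEq m] (Φ : Matrix n n ℂ → Matrix m m ℂ) : ℝ :=
  sSup {r | ∃ X : Matrix (n × n) (n × n) ℂ, traceNorm X ≤ 1 ∧ r = traceNorm (tensorExt Φ X)}

/-- `M^{⊗n}`: the `n`-fold tensor power of the single-qubit computational-basis
measurement channel `M(ρ) = P₀ρP₀ + P₁ρP₁`. Its entry at `(i, j)` is
`(∏ₖ δ_{iₖ jₖ}) ⬝ ρᵢⱼ`. -/
def measChanPow (n : ℕ) (X : Matrix (Fin n → Fin 2) (Fin n → Fin 2) ℂ) :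
    Matrix (Fin n → Fin 2) (Fin n → Fin 2) ℂ :=
  Matrix.of fun i j => (∏ k, if i k = j k then (1 : ℂ) else 0) * X i j

set_option linter.unusedSectionVars false

namespace DN
open Matrix
open scoped MatrixOrder

variable {ι : Type*} [Fintype ι] [DecidableEq ι]

lemma psd_smul {A : Matrix ι ι ℂ} (hA : A.PosSemidef) {r : ℝ} (hr : 0 ≤ r) :
    ((r:ℂ) • A).PosSemidef := by
  refine PosSemidef.of_dotProduct_mulVec_nonneg (by simp [Matrix.IsHermitian, conjTranspose_smul, hA.1.eq]) fun x => ?_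
  rw [smul_mulVec, dotProduct_smul, smul_eq_mul]
  exact mul_nonneg (by exact_mod_cast Complex.zero_le_real.mpr hr) (hA.dotProduct_mulVec_nonneg x)

lemma traceNorm_eq_trace_sqrt (X : Matrix ι ι ℂ) :
    traceNorm X = (CFC.sqrt (Xᴴ * X)).trace.re := by
  have hS := Matrix.posSemidef_conjTranspose_mul_self X
  rw [CFC.sqrt_eq_real_sqrt _ hS.nonneg, cfcₙ_eq_cfc, hS.1.cfc_eq]
  rfl

lemma traceNorm_eq_of_sq {X R : Matrix ι ι ℂ} (hR : R.PosSemidef) (h : R ^ 2 = Xᴴ * X) :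
    traceNorm X = R.trace.re := by
  rw [traceNorm_eq_trace_sqrt, CFC.sqrt_unique (a := Xᴴ * X) (b := R) (by rw [← h, pow_two]) hR.nonneg]

lemma traceNorm_zero : traceNorm (0 : Matrix ι ι ℂ) = 0 := by
  rw [traceNorm_eq_of_sq (R := 0) PosSemidef.zero (by simp), trace_zero, Complex.zero_re]

lemma traceNorm_congr {X Y : Matrix ι ι ℂ} (h : Xᴴ * X = Yᴴ * Y) :
    traceNorm X = traceNorm Y := by
  have h2 := (Matrix.posSemidef_conjTranspose_mul_self Y)
  rw [traceNorm_eq_trace_sqrt Y]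
  exact traceNorm_eq_of_sq (nonneg_iff_posSemidef.mp (CFC.sqrt_nonneg (Yᴴ * Y))) (by rw [CFC.sq_sqrt _ h2.nonneg, h])

lemma traceNorm_neg (X : Matrix ι ι ℂ) : traceNorm (-X) = traceNorm X :=
  traceNorm_congr (by simp)

lemma traceNorm_psd {X : Matrix ι ι ℂ} (hX : X.PosSemidef) : traceNorm X = X.trace.re :=
  traceNorm_eq_of_sq hX (by rw [pow_two, hX.isHermitian.eq])

lemma traceNorm_smul (r : ℝ) (hr : 0 ≤ r) (X : Matrix ι ι ℂ) :
    traceNorm ((r : ℂ) • X) = r * traceNorm X := by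
  have hS := (Matrix.posSemidef_conjTranspose_mul_self X)
  rw [traceNorm_eq_of_sq (psd_smul (nonneg_iff_posSemidef.mp (CFC.sqrt_nonneg (Xᴴ * X))) hr) ?eq]
  case eq =>
    rw [smul_pow, CFC.sq_sqrt _ hS.nonneg, conjTranspose_smul, smul_mul, mul_smul_comm, smul_smul]
    congr 1
    simp [sq]
  · rw [traceNorm_eq_trace_sqrt]
    rw [trace_smul, smul_eq_mul, Complex.re_ofReal_mul]

lemma traceNorm_conj_diag {f : ι → ℂ} (h1 : ∀ i, f i * f i = 1) (h2 : ∀ i, star (f i) = f i)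
    (X : Matrix ι ι ℂ) :
    traceNorm (diagonal f * X * diagonal f) = traceNorm X := by
  set D := diagonal f with hD
  have hDD : D * D = 1 := by
    rw [hD, diagonal_mul_diagonal, ← diagonal_one]
    exact congrArg diagonal (funext h1)
  have hDH : Dᴴ = D := by
    rw [hD, diagonal_conjTranspose]
    exact congrArg diagonal (funext h2)
  have hS := (Matrix.posSemidef_conjTranspose_mul_self X)
  have hR : (D * CFC.sqrt (Xᴴ * X) * D).PosSemidef := by
    have := (nonneg_iff_posSemidef.mp (CFC.sqrt_nonneg (Xᴴ * X))).mul_mul_conjTranspose_same D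
    rwa [hDH] at this
  rw [traceNorm_eq_of_sq hR ?eq]
  case eq =>
    have hDDx : ∀ Z : Matrix ι ι ℂ, D * (D * Z) = Z := fun Z => by
      rw [← mul_assoc, hDD, one_mul]
    rw [pow_two]
    simp only [conjTranspose_mul, hDH, Matrix.mul_assoc, hDDx]
    rw [← Matrix.mul_assoc (CFC.sqrt (Xᴴ * X)) (CFC.sqrt (Xᴴ * X)), CFC.sqrt_mul_sqrt_self _ hS.nonneg, Matrix.mul_assoc]
  · rw [traceNorm_eq_trace_sqrt]
    rw [trace_mul_cycle, hDD, one_mul]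


lemma traceNorm_eq_sum_sqrt (X : Matrix ι ι ℂ) :
    traceNorm X = ∑ i, Real.sqrt ((Matrix.posSemidef_conjTranspose_mul_self X).1.eigenvalues i) := by
  unfold traceNorm
  set hH := Matrix.posSemidef_conjTranspose_mul_self X
  rw [trace_mul_cycle, Unitary.coe_star_mul_self, one_mul,
    trace_diagonal]
  rw [Complex.re_sum]
  simp

lemma psd_diag_re_nonneg {P : Matrix ι ι ℂ} (hP : P.PosSemidef) (i : ι) : 0 ≤ (P i i).re := by
  have h := hP.dotProduct_mulVec_nonneg (Pi.single i 1)
  have : star (Pi.single i 1) ⬝ᵥ P *ᵥ (Pi.single i (1:ℂ)) = P i i := by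
    simp [dotProduct, mulVec, Pi.single_apply, Finset.sum_ite_eq, Finset.sum_ite_eq']
  rw [this] at h
  exact (Complex.le_def.mp h).1

lemma cs_vec (a b : ι → ℂ) :
    ‖∑ k, a k * b k‖ ≤ Real.sqrt (∑ k, ‖a k‖^2) * Real.sqrt (∑ k, ‖b k‖^2) := by
  refine (norm_sum_le _ _).trans ?_
  calc ∑ k, ‖a k * b k‖ = ∑ k, ‖a k‖ * ‖b k‖ := by simp [norm_mul]
    _ ≤ _ := Real.sum_mul_le_sqrt_mul_sqrt _ _ _

lemma re_trace_mul_le (M X : Matrix ι ι ℂ) (hM : ((1 : Matrix ι ι ℂ) - M * Mᴴ).PosSemidef) :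
    (M * X).trace.re ≤ traceNorm X := by
  set hH := Matrix.posSemidef_conjTranspose_mul_self X with hHdef
  set V : Matrix ι ι ℂ := ↑(hH.1.eigenvectorUnitary) with hV
  have hVsV : star V * V = 1 := Unitary.coe_star_mul_self _
  have hVVs : V * star V = 1 := Unitary.coe_mul_star_self _
  set N : Matrix ι ι ℂ := star V * M with hN
  set C : Matrix ι ι ℂ := X * V with hC
  have htr : (M * X).trace = (N * C).trace := by
    have h1 : N * C = star V * (M * X) * V := by rw [hN, hC]; noncomm_ring
    rw [h1, trace_mul_cycle, hVVs, one_mul]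
  -- row norms of N
  have hNbound : ∀ i, ∑ k, ‖N i k‖^2 ≤ 1 := by
    intro i
    have hNH : Nᴴ = Mᴴ * V := by
      rw [hN, conjTranspose_mul]
      congr 1
      rw [← Matrix.star_eq_conjTranspose, star_star]
    have hPSD : ((1 : Matrix ι ι ℂ) - N * Nᴴ).PosSemidef := by
      have h2 := hM.conjTranspose_mul_mul_same V
      have key : Vᴴ * (1 - M * Mᴴ) * V = 1 - N * Nᴴ := by
        rw [hNH, hN, ← Matrix.star_eq_conjTranspose]
        rw [Matrix.mul_sub, Matrix.sub_mul, Matrix.mul_one, hVsV]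
        congr 1
        noncomm_ring
      rwa [key] at h2
    have hdiag : ((N * Nᴴ) i i).re = ∑ k, ‖N i k‖^2 := by
      rw [mul_apply, Complex.re_sum]
      refine Finset.sum_congr rfl fun k _ => ?_
      rw [conjTranspose_apply]
      simp [RCLike.star_def, Complex.mul_conj, Complex.normSq_eq_norm_sq, ← Complex.ofReal_pow]
    have h0 := psd_diag_re_nonneg hPSD i
    rw [Matrix.sub_apply, Complex.sub_re, one_apply_eq, Complex.one_re, hdiag] at h0
    linarith
  have hCnorm : ∀ i, ∑ k, ‖C k i‖^2 = hH.1.eigenvalues i := by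
    intro i
    have hCC : Cᴴ * C = diagonal (RCLike.ofReal ∘ hH.1.eigenvalues) := by
      rw [hC, conjTranspose_mul, ← Matrix.star_eq_conjTranspose V]
      calc star V * Xᴴ * (X * V) = star V * (Xᴴ * X) * V := by noncomm_ring
        _ = _ := by simpa only [Unitary.conjStarAlgAut_star_apply, Unitary.coe_star] using
            hH.1.conjStarAlgAut_star_eigenvectorUnitary
    have : ((Cᴴ * C) i i) = ((hH.1.eigenvalues i : ℝ) : ℂ) := by
      rw [hCC]; simp
    rw [mul_apply] at this
    have h2 : (∑ k, (Cᴴ i k * C k i)).re = hH.1.eigenvalues i := by rw [this]; simp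
    rw [Complex.re_sum] at h2
    rw [← h2]
    refine Finset.sum_congr rfl fun k _ => ?_
    rw [conjTranspose_apply, mul_comm]
    simp [RCLike.star_def, Complex.mul_conj, Complex.normSq_eq_norm_sq, ← Complex.ofReal_pow]
  rw [htr, trace, Complex.re_sum]
  calc ∑ i, ((N * C) i i).re ≤ ∑ i, ‖(N*C) i i‖ := by
        refine Finset.sum_le_sum fun i _ => Complex.re_le_norm _
    _ ≤ ∑ i, Real.sqrt (∑ k, ‖N i k‖^2) * Real.sqrt (∑ k, ‖C k i‖^2) := by
        refine Finset.sum_le_sum fun i _ => ?_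
        rw [mul_apply]
        exact cs_vec _ _
    _ ≤ ∑ i, Real.sqrt (hH.1.eigenvalues i) := by
        refine Finset.sum_le_sum fun i _ => ?_
        rw [hCnorm i]
        calc Real.sqrt (∑ k, ‖N i k‖^2) * Real.sqrt (hH.1.eigenvalues i)
            ≤ 1 * Real.sqrt (hH.1.eigenvalues i) := by
              refine mul_le_mul_of_nonneg_right ?_ (Real.sqrt_nonneg _)
              exact Real.sqrt_le_one.mpr (hNbound i)
          _ = _ := one_mul _
    _ = traceNorm X := (traceNorm_eq_sum_sqrt X).symm


lemma sqrt_sub_div_le {l ε : ℝ} (hl : 0 ≤ l) (hε : 0 < ε) :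
    Real.sqrt l - l / Real.sqrt (l + ε) ≤ Real.sqrt ε := by
  set a := Real.sqrt l with hadef
  set b := Real.sqrt (l + ε) with hbdef
  set c := Real.sqrt ε with hcdef
  have ha : 0 ≤ a := Real.sqrt_nonneg _
  have hc : 0 < c := Real.sqrt_pos.mpr hε
  have hb : 0 < b := Real.sqrt_pos.mpr (by linarith)
  have hab : a ≤ b := Real.sqrt_le_sqrt (by linarith)
  have hcb : c ≤ b := Real.sqrt_le_sqrt (by linarith)
  have h1 : a ^ 2 = l := Real.sq_sqrt hl
  have h2 : b ^ 2 = l + ε := Real.sq_sqrt (by linarith)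
  have h3 : c ^ 2 = ε := Real.sq_sqrt hε.le
  have hbac : b ≤ a + c := by
    rw [hbdef, ← Real.sqrt_sq (by positivity : (0:ℝ) ≤ a + c)]
    apply Real.sqrt_le_sqrt
    nlinarith [mul_nonneg ha hc.le]
  rw [sub_le_comm, ← h1, le_div_iff₀ hb]
  nlinarith [mul_le_mul_of_nonneg_left (show b - a ≤ c by linarith) ha,
    mul_le_mul_of_nonneg_right hab hc.le]

lemma exists_almost_dual (X : Matrix ι ι ℂ) {ε : ℝ} (hε : 0 < ε) :
    ∃ M : Matrix ι ι ℂ, ((1 : Matrix ι ι ℂ) - M * Mᴴ).PosSemidef ∧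
      traceNorm X ≤ (M * X).trace.re + Fintype.card ι * Real.sqrt ε := by
  set hH := Matrix.posSemidef_conjTranspose_mul_self X with hHd
  set lam := hH.1.eigenvalues with hlamd
  have hlam0 : ∀ i, 0 ≤ lam i := hH.eigenvalues_nonneg
  set V : Matrix ι ι ℂ := ↑(hH.1.eigenvectorUnitary) with hVd
  have hVsV : star V * V = 1 := Unitary.coe_star_mul_self _
  have hVVs : V * star V = 1 := Unitary.coe_mul_star_self _
  have hsVVx : ∀ Z : Matrix ι ι ℂ, star V * (V * Z) = Z := fun Z => by
    rw [← Matrix.mul_assoc, hVsV, Matrix.one_mul]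
  set g : ι → ℝ := fun i => (Real.sqrt (lam i + ε))⁻¹ with hgd
  have hpos : ∀ i, 0 < lam i + ε := fun i => by have := hlam0 i; linarith
  have hgpos : ∀ i, 0 < g i := fun i => inv_pos.mpr (Real.sqrt_pos.mpr (hpos i))
  have hgsq : ∀ i, g i ^ 2 = (lam i + ε)⁻¹ := fun i => by
    rw [hgd]
    simp only
    rw [inv_pow, Real.sq_sqrt (hpos i).le]
  set Dg : Matrix ι ι ℂ := diagonal (RCLike.ofReal ∘ g) with hDgd
  set Dl : Matrix ι ι ℂ := diagonal (RCLike.ofReal ∘ lam) with hDld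
  have hspec : Xᴴ * X = V * Dl * star V := by
    simpa only [Unitary.conjStarAlgAut_apply, Unitary.coe_star] using hH.1.spectral_theorem
  have hDgH : Dgᴴ = Dg := by
    rw [hDgd, diagonal_conjTranspose]
    exact congrArg diagonal (funext fun i => by
      simp [Pi.star_apply, RCLike.star_def, Complex.conj_ofReal])
  have hsVH : (star V)ᴴ = V := by rw [← Matrix.star_eq_conjTranspose, star_star]
  have hVH : Vᴴ = star V := (Matrix.star_eq_conjTranspose V).symm
  set M : Matrix ι ι ℂ := V * Dg * star V * Xᴴ with hMd
  have hMX : M * X = V * (Dg * Dl) * star V := by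
    rw [hMd]
    simp only [Matrix.mul_assoc]
    rw [hspec]
    simp only [Matrix.mul_assoc, hsVVx]
  refine ⟨M, ?_, ?_⟩
  · -- PSD of 1 - M Mᴴ
    have hMH : Mᴴ = X * (V * (Dg * star V)) := by
      rw [hMd]
      simp only [conjTranspose_mul, conjTranspose_conjTranspose, hDgH, hsVH, hVH,
        Matrix.mul_assoc]
    have hMM : M * Mᴴ = V * (Dg * Dl * Dg) * star V := by
      rw [hMd, hMH]
      simp only [Matrix.mul_assoc]
      rw [← Matrix.mul_assoc Xᴴ X, hspec]
      simp only [Matrix.mul_assoc, hsVVx]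
    have hD : ((1 : Matrix ι ι ℂ) - M * Mᴴ) =
        V * diagonal (RCLike.ofReal ∘ fun i => 1 - g i ^ 2 * lam i) * star V := by
      rw [hMM]
      have h1 : (1 : Matrix ι ι ℂ) = V * 1 * star V := by rw [Matrix.mul_one, hVVs]
      nth_rewrite 1 [h1]
      rw [← Matrix.sub_mul, ← Matrix.mul_sub]
      congr 2
      rw [hDgd, hDld, diagonal_mul_diagonal, diagonal_mul_diagonal, ← diagonal_one,
        diagonal_sub]
      exact congrArg diagonal (funext fun i => by
        simp only [Pi.sub_apply, Function.comp_apply, Pi.one_apply, RCLike.ofReal_sub,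
          RCLike.ofReal_mul, RCLike.ofReal_pow, RCLike.ofReal_one]
        ring)
    rw [hD]
    have hnn : ∀ i, (0:ℂ) ≤ (RCLike.ofReal ∘ fun i => 1 - g i ^ 2 * lam i) i := by
      intro i
      simp only [Function.comp_apply]
      rw [RCLike.ofReal_nonneg, hgsq i, sub_nonneg, inv_mul_eq_div, div_le_one (hpos i)]
      linarith [hε]
    have := (posSemidef_diagonal_iff.mpr hnn).mul_mul_conjTranspose_same V
    rwa [Matrix.star_eq_conjTranspose]
  · -- trace bound
    have htr : (M * X).trace.re = ∑ i, g i * lam i := by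
      rw [hMX, trace_mul_cycle, hVsV, Matrix.one_mul, hDgd, hDld, diagonal_mul_diagonal,
        trace_diagonal, Complex.re_sum]
      refine Finset.sum_congr rfl fun i _ => ?_
      simp [← Complex.ofReal_mul]
    rw [htr, traceNorm_eq_sum_sqrt]
    have hsum : ∑ i, Real.sqrt (lam i) ≤ ∑ i, (g i * lam i + Real.sqrt ε) := by
      refine Finset.sum_le_sum fun i _ => ?_
      have := sqrt_sub_div_le (hlam0 i) hε
      rw [hgd]
      simp only
      rw [inv_mul_eq_div]
      linarith [this]
    rw [Finset.sum_add_distrib, Finset.sum_const, Finset.card_univ, nsmul_eq_mul] at hsum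
    exact hsum

lemma traceNorm_add_le (A B : Matrix ι ι ℂ) :
    traceNorm (A + B) ≤ traceNorm A + traceNorm B := by
  refine le_of_forall_pos_le_add fun δ hδ => ?_
  have hε : (0:ℝ) < (δ / (Fintype.card ι + 1)) ^ 2 := by positivity
  obtain ⟨M, hM1, hM2⟩ := exists_almost_dual (A + B) hε
  have h3 : (M * (A + B)).trace.re = (M * A).trace.re + (M * B).trace.re := by
    rw [Matrix.mul_add, trace_add, Complex.add_re]
  have hcard : (Fintype.card ι : ℝ) * Real.sqrt ((δ / (Fintype.card ι + 1)) ^ 2) ≤ δ := by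
    rw [Real.sqrt_sq (by positivity), ← mul_div_assoc, div_le_iff₀ (by positivity)]
    nlinarith [hδ, (Nat.cast_nonneg (Fintype.card ι) : (0:ℝ) ≤ Fintype.card ι)]
  have hA := re_trace_mul_le M A hM1
  have hB := re_trace_mul_le M B hM1
  calc traceNorm (A + B) ≤ (M * (A + B)).trace.re +
        Fintype.card ι * Real.sqrt ((δ / (Fintype.card ι + 1)) ^ 2) := hM2
    _ ≤ traceNorm A + traceNorm B + δ := by rw [h3]; linarith

lemma traceNorm_sum_le {σ : Type*} (s : Finset σ) (f : σ → Matrix ι ι ℂ) :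
    traceNorm (∑ j ∈ s, f j) ≤ ∑ j ∈ s, traceNorm (f j) := by
  classical
  induction s using Finset.cons_induction with
  | empty => simp [traceNorm_zero]
  | cons a s ha ih =>
      rw [Finset.sum_cons, Finset.sum_cons]
      exact (traceNorm_add_le _ _).trans (by linarith)

section Meas

abbrev Q (n : ℕ) := Fin n → Fin 2

noncomputable def sgn (n : ℕ) (s i : Q n) : ℂ := ∏ k, if s k = 1 ∧ i k = 1 then (-1:ℂ) else 1

lemma sgn_mul_self (n : ℕ) (s i : Q n) : sgn n s i * sgn n s i = 1 := by
  have h : ∀ k : Fin n, (if s k = 1 ∧ i k = 1 then (-1:ℂ) else 1) *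
      (if s k = 1 ∧ i k = 1 then (-1:ℂ) else 1) = 1 := fun k => by
    by_cases h : s k = 1 ∧ i k = 1 <;> simp [h]
  rw [sgn, ← Finset.prod_mul_distrib]
  simp only [h, Finset.prod_const_one]

lemma star_sgn (n : ℕ) (s i : Q n) : star (sgn n s i) = sgn n s i := by
  rw [sgn, star_prod]
  refine Finset.prod_congr rfl fun k _ => ?_
  by_cases h : s k = 1 ∧ i k = 1 <;> simp [h]

lemma sgn_zero (n : ℕ) (i : Q n) : sgn n (fun _ => 0) i = 1 := by
  rw [sgn]
  refine Finset.prod_eq_one fun k _ => ?_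
  simp

lemma prod_delta {n : ℕ} (i j : Q n) :
    (∏ k, if i k = j k then (1:ℂ) else 0) = if i = j then 1 else 0 := by
  by_cases h : i = j
  · simp [h]
  · obtain ⟨k, hk⟩ := Function.ne_iff.mp h
    rw [if_neg h]
    exact Finset.prod_eq_zero (Finset.mem_univ k) (if_neg hk)

lemma char_sum (n : ℕ) (i j : Q n) :
    ∑ s : Q n, sgn n s i * sgn n s j = (2:ℂ)^n * (if i = j then 1 else 0) := by
  have h1 : ∀ s : Q n, sgn n s i * sgn n s j
      = ∏ k, ((if s k = 1 ∧ i k = 1 then (-1:ℂ) else 1) *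
              (if s k = 1 ∧ j k = 1 then (-1:ℂ) else 1)) := by
    intro s
    rw [sgn, sgn, Finset.prod_mul_distrib]
  rw [Finset.sum_congr rfl fun s _ => h1 s]
  have h2 : ∑ s : Q n, ∏ k, ((if s k = 1 ∧ i k = 1 then (-1:ℂ) else 1) *
              (if s k = 1 ∧ j k = 1 then (-1:ℂ) else 1))
      = ∏ k, ∑ a : Fin 2, ((if a = 1 ∧ i k = 1 then (-1:ℂ) else 1) *
              (if a = 1 ∧ j k = 1 then (-1:ℂ) else 1)) := by
    rw [Finset.prod_univ_sum]
    rw [← Fintype.piFinset_univ]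
  rw [h2]
  have h3 : ∀ x y : Fin 2, ∑ a : Fin 2, ((if a = 1 ∧ x = 1 then (-1:ℂ) else 1) *
      (if a = 1 ∧ y = 1 then (-1:ℂ) else 1)) = if x = y then 2 else 0 := by
    intro x y
    fin_cases x <;> fin_cases y <;> simp [Fin.sum_univ_two] <;> norm_num
  rw [Finset.prod_congr rfl fun k _ => h3 (i k) (j k)]
  have h4 : ∀ k : Fin n, (if i k = j k then (2:ℂ) else 0)
      = 2 * (if i k = j k then (1:ℂ) else 0) := by
    intro k; by_cases h : i k = j k <;> simp [h]
  rw [Finset.prod_congr rfl fun k _ => h4 k, Finset.prod_mul_distrib, Finset.prod_const,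
    Finset.card_univ, Fintype.card_fin, prod_delta]

lemma tensorExt_apply (n : ℕ) (Y : Matrix (Q n × Q n) (Q n × Q n) ℂ) (p q : Q n × Q n) :
    tensorExt (fun X => X - measChanPow n X) Y p q
      = Y p q - (if p.2 = q.2 then 1 else 0) * Y p q := by
  show (Matrix.of fun a b => Y (p.1, a) (q.1, b)) p.2 q.2
      - measChanPow n (Matrix.of fun a b => Y (p.1, a) (q.1, b)) p.2 q.2 = _
  rw [measChanPow]
  simp only [Matrix.of_apply]
  rw [prod_delta]

lemma rep (n : ℕ) (Y : Matrix (Q n × Q n) (Q n × Q n) ℂ) :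
    tensorExt (fun X => X - measChanPow n X) Y
      = (((((2:ℝ)^n)⁻¹ : ℝ)) : ℂ) • ∑ s ∈ Finset.univ.erase (fun _ => 0 : Q n),
          (Y - Matrix.diagonal (fun p : Q n × Q n => sgn n s p.2) * Y
                * Matrix.diagonal (fun p : Q n × Q n => sgn n s p.2)) := by
  have hd : ((2:ℂ)^n) ≠ 0 := by positivity
  ext p q
  rw [tensorExt_apply]
  rw [Matrix.smul_apply, Matrix.sum_apply]
  have hterm : ∀ s : Q n, (Y - Matrix.diagonal (fun p : Q n × Q n => sgn n s p.2) * Y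
        * Matrix.diagonal (fun p : Q n × Q n => sgn n s p.2)) p q
      = Y p q - sgn n s p.2 * sgn n s q.2 * Y p q := by
    intro s
    rw [Matrix.sub_apply, Matrix.mul_diagonal, Matrix.diagonal_mul]
    ring_nf
  rw [Finset.sum_congr rfl fun s _ => hterm s]
  rw [Finset.sum_erase_eq_sub (Finset.mem_univ _)]
  rw [Finset.sum_sub_distrib, Finset.sum_const, ← Finset.sum_mul, char_sum]
  rw [sgn_zero, sgn_zero, Finset.card_univ]
  have hcard : (Fintype.card (Q n)) = 2^n := by
    rw [Fintype.card_fun, Fintype.card_fin, Fintype.card_fin]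
  rw [hcard]
  have hcast : ((((2:ℝ)^n)⁻¹ : ℝ) : ℂ) = ((2:ℂ)^n)⁻¹ := by push_cast; ring
  rw [hcast, smul_eq_mul]
  field_simp
  by_cases h : p.2 = q.2 <;> simp [h] <;> ring

lemma card_Q (n : ℕ) : Fintype.card (Q n) = 2^n := by
  rw [Fintype.card_fun, Fintype.card_fin, Fintype.card_fin]

lemma sum_diag {n : ℕ} (f : Q n × Q n → ℂ) :
    ∑ p : Q n × Q n, (if p.1 = p.2 then f p else 0) = ∑ a : Q n, f (a, a) := by
  rw [Fintype.sum_prod_type]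
  refine Finset.sum_congr rfl fun a _ => ?_
  simp

lemma quad_expand {κ : Type*} [Fintype κ] (A : Matrix κ κ ℂ) (x : κ → ℂ) :
    dotProduct (star x) (A.mulVec x) = ∑ p, ∑ q, star (x p) * A p q * x q := by
  simp only [dotProduct, Matrix.mulVec, Finset.mul_sum]
  refine Finset.sum_congr rfl fun p _ => Finset.sum_congr rfl fun q _ => ?_
  simp [mul_assoc]

noncomputable def X0 (n : ℕ) : Matrix (Q n × Q n) (Q n × Q n) ℂ :=
  Matrix.of fun p q => if p.1 = p.2 ∧ q.1 = q.2 then ((2:ℂ)^n)⁻¹ else 0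

lemma X0_psd (n : ℕ) : (X0 n).PosSemidef := by
  refine PosSemidef.of_dotProduct_mulVec_nonneg ?_ ?_
  · ext p q
    simp only [X0, Matrix.conjTranspose_apply, Matrix.of_apply]
    by_cases h1 : p.1 = p.2 <;> by_cases h2 : q.1 = q.2 <;> simp [h1, h2]
  · intro x
    rw [quad_expand]
    have h1 : ∀ p q : Q n × Q n, star (x p) * (X0 n) p q * x q
        = (if p.1 = p.2 then star (x p) else 0) *
          (if q.1 = q.2 then ((2:ℂ)^n)⁻¹ * x q else 0) := by
      intro p q
      simp only [X0, Matrix.of_apply]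
      by_cases h1 : p.1 = p.2 <;> by_cases h2 : q.1 = q.2 <;> simp [h1, h2] <;> ring
    rw [Finset.sum_congr rfl fun p _ => Finset.sum_congr rfl fun q _ => h1 p q]
    have e0 : ∀ p : Q n × Q n, ∑ q : Q n × Q n, (if p.1 = p.2 then star (x p) else 0) *
          (if q.1 = q.2 then ((2:ℂ)^n)⁻¹ * x q else 0)
        = (if p.1 = p.2 then star (x p) else 0) *
          ∑ q : Q n × Q n, (if q.1 = q.2 then ((2:ℂ)^n)⁻¹ * x q else 0) := fun p =>
      (Finset.mul_sum _ _ _).symm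
    rw [Finset.sum_congr rfl fun p _ => e0 p, ← Finset.sum_mul]
    have e1 : ∑ p : Q n × Q n, (if p.1 = p.2 then star (x p) else 0)
        = star (∑ a : Q n, x (a,a)) := by
      rw [sum_diag (f := fun p => star (x p)), star_sum]
    have e2 : ∑ q : Q n × Q n, (if q.1 = q.2 then ((2:ℂ)^n)⁻¹ * x q else 0)
        = ((2:ℂ)^n)⁻¹ * ∑ a : Q n, x (a,a) := by
      rw [sum_diag (f := fun q => ((2:ℂ)^n)⁻¹ * x q), Finset.mul_sum]
    rw [e1, e2]
    set t := ∑ a : Q n, x (a,a)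
    have e3 : star t * (((2:ℂ)^n)⁻¹ * t)
        = ((((2:ℝ)^n)⁻¹ * Complex.normSq t : ℝ) : ℂ) := by
      have : star t * (((2:ℂ)^n)⁻¹ * t) = ((2:ℂ)^n)⁻¹ * ((starRingEnd ℂ) t * t) := by
        rw [Complex.star_def]; ring
      rw [this, mul_comm ((starRingEnd ℂ) t) t, Complex.mul_conj]
      push_cast
      ring
    rw [e3, Complex.zero_le_real]
    exact mul_nonneg (by positivity) (Complex.normSq_nonneg t)

lemma X0_traceNorm (n : ℕ) : traceNorm (X0 n) = 1 := by
  rw [traceNorm_psd (X0_psd n), Matrix.trace]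
  have h : ∀ p : Q n × Q n, (X0 n).diag p = if p.1 = p.2 then ((2:ℂ)^n)⁻¹ else 0 := by
    intro p; simp [X0, Matrix.diag]
  rw [Finset.sum_congr rfl fun p _ => h p, sum_diag (f := fun _ => ((2:ℂ)^n)⁻¹)]
  rw [Finset.sum_const, Finset.card_univ, card_Q, nsmul_eq_mul]
  have : ((2^n : ℕ) : ℂ) * ((2:ℂ)^n)⁻¹ = 1 := by
    push_cast
    field_simp
  rw [this, Complex.one_re]

noncomputable def R0 (n : ℕ) : Matrix (Q n × Q n) (Q n × Q n) ℂ :=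
  Matrix.of fun p q => if p.1 = p.2 ∧ q.1 = q.2 then
    (((2:ℂ)^n - 2)/((2:ℂ)^n)^2 + ((2:ℂ)^n)⁻¹ * (if p.2 = q.2 then 1 else 0)) else 0

lemma Y0_eq (n : ℕ) : tensorExt (fun X => X - measChanPow n X) (X0 n)
    = Matrix.of (fun p q : Q n × Q n =>
        if p.1 = p.2 ∧ q.1 = q.2 ∧ p.2 ≠ q.2 then ((2:ℂ)^n)⁻¹ else 0) := by
  ext p q
  rw [tensorExt_apply]
  simp only [X0, Matrix.of_apply]
  by_cases h1 : p.1 = p.2 <;> by_cases h2 : q.1 = q.2 <;> by_cases h3 : p.2 = q.2 <;>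
    simp [h1, h2, h3]

lemma ind_sum (n : ℕ) (i j : Q n) :
    ∑ k : Q n, ((1 - (if k = i then (1:ℂ) else 0)) * (1 - (if k = j then (1:ℂ) else 0)))
      = (2:ℂ)^n - 2 + (if i = j then 1 else 0) := by
  have h : ∀ k : Q n, (1 - (if k = i then (1:ℂ) else 0)) * (1 - (if k = j then (1:ℂ) else 0))
      = 1 - (if k = i then (1:ℂ) else 0) - (if k = j then (1:ℂ) else 0)
        + (if k = i then (if k = j then (1:ℂ) else 0) else 0) := by
    intro k
    by_cases h1 : k = i <;> by_cases h2 : k = j <;> simp [h1, h2]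
  rw [Finset.sum_congr rfl fun k _ => h k]
  rw [Finset.sum_add_distrib, Finset.sum_sub_distrib, Finset.sum_sub_distrib]
  rw [Finset.sum_const, Finset.card_univ, card_Q]
  rw [Finset.sum_ite_eq' Finset.univ i (fun _ => (1:ℂ)),
    Finset.sum_ite_eq' Finset.univ j (fun _ => (1:ℂ)),
    Finset.sum_ite_eq' Finset.univ i (fun k => if k = j then (1:ℂ) else 0)]
  simp only [Finset.mem_univ, if_true]
  push_cast
  ring

lemma ind_prod_sum (n : ℕ) (i j : Q n) :
    ∑ k : Q n, ((if i = k then (1:ℂ) else 0) * (if k = j then 1 else 0))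
      = if i = j then 1 else 0 := by
  have h : ∀ k : Q n, (if i = k then (1:ℂ) else 0) * (if k = j then 1 else 0)
      = if i = k then (if k = j then (1:ℂ) else 0) else 0 := fun k => by
    by_cases h1 : i = k <;> simp [h1]
  rw [Finset.sum_congr rfl fun k _ => h k,
    Finset.sum_ite_eq Finset.univ i (fun k => if k = j then (1:ℂ) else 0)]
  simp

lemma g_sum (n : ℕ) (i j : Q n) :
    ∑ k : Q n, ((((2:ℂ)^n - 2)/((2:ℂ)^n)^2 + ((2:ℂ)^n)⁻¹ * (if i = k then 1 else 0)) *
        (((2:ℂ)^n - 2)/((2:ℂ)^n)^2 + ((2:ℂ)^n)⁻¹ * (if k = j then 1 else 0)))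
      = (((2:ℂ)^n)⁻¹)^2 * ((2:ℂ)^n - 2 + (if i = j then 1 else 0)) := by
  have hd : ((2:ℂ)^n) ≠ 0 := by
    intro h
    exact two_ne_zero (pow_eq_zero_iff'.mp h).1
  set b : ℂ := ((2:ℂ)^n - 2)/((2:ℂ)^n)^2 with hb
  set g : ℂ := ((2:ℂ)^n)⁻¹ with hg
  have h : ∀ k : Q n, (b + g * (if i = k then (1:ℂ) else 0)) * (b + g * (if k = j then 1 else 0))
      = b*b + b*g*(if i = k then 1 else 0) + b*g*(if k = j then 1 else 0)
        + g*g*((if i = k then (1:ℂ) else 0) * (if k = j then 1 else 0)) := fun k => by ring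
  rw [Finset.sum_congr rfl fun k _ => h k]
  rw [Finset.sum_add_distrib, Finset.sum_add_distrib, Finset.sum_add_distrib]
  rw [Finset.sum_const, Finset.card_univ, card_Q]
  rw [← Finset.mul_sum, ← Finset.mul_sum, ← Finset.mul_sum]
  rw [Finset.sum_ite_eq Finset.univ i (fun _ => (1:ℂ)),
    Finset.sum_ite_eq' Finset.univ j (fun _ => (1:ℂ)), ind_prod_sum n i j]
  simp only [Finset.mem_univ, if_true]
  rw [hb, hg]
  simp only [nsmul_eq_mul]
  push_cast
  generalize (2:ℂ)^n = N at hd ⊢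
  by_cases hij : i = j <;> simp only [hij, if_true, if_false] <;> field_simp <;> ring

lemma RR_eq_YHY (n : ℕ) :
    R0 n * R0 n = (Matrix.of (fun p q : Q n × Q n =>
        if p.1 = p.2 ∧ q.1 = q.2 ∧ p.2 ≠ q.2 then ((2:ℂ)^n)⁻¹ else 0))ᴴ *
      (Matrix.of (fun p q : Q n × Q n =>
        if p.1 = p.2 ∧ q.1 = q.2 ∧ p.2 ≠ q.2 then ((2:ℂ)^n)⁻¹ else 0)) := by
  ext p q
  rw [Matrix.mul_apply, Matrix.mul_apply]
  -- LHS
  have hL : ∀ r : Q n × Q n, R0 n p r * R0 n r q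
      = if r.1 = r.2 then ((if p.1 = p.2 then (1:ℂ) else 0) * (if q.1 = q.2 then 1 else 0) *
          ((((2:ℂ)^n - 2)/((2:ℂ)^n)^2 + ((2:ℂ)^n)⁻¹ * (if p.2 = r.2 then 1 else 0)) *
           (((2:ℂ)^n - 2)/((2:ℂ)^n)^2 + ((2:ℂ)^n)⁻¹ * (if r.2 = q.2 then 1 else 0)))) else 0 := by
    intro r
    simp only [R0, Matrix.of_apply]
    by_cases h1 : p.1 = p.2 <;> by_cases h2 : q.1 = q.2 <;> by_cases h3 : r.1 = r.2 <;>
      simp [h1, h2, h3] <;> ring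
  have hR : ∀ r : Q n × Q n, (Matrix.of (fun p q : Q n × Q n =>
        if p.1 = p.2 ∧ q.1 = q.2 ∧ p.2 ≠ q.2 then ((2:ℂ)^n)⁻¹ else 0))ᴴ p r *
      (Matrix.of (fun p q : Q n × Q n =>
        if p.1 = p.2 ∧ q.1 = q.2 ∧ p.2 ≠ q.2 then ((2:ℂ)^n)⁻¹ else 0)) r q
      = if r.1 = r.2 then ((if p.1 = p.2 then (1:ℂ) else 0) * (if q.1 = q.2 then 1 else 0) *
          (((2:ℂ)^n)⁻¹ * ((2:ℂ)^n)⁻¹ *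
           ((1 - (if r.2 = p.2 then 1 else 0)) * (1 - (if r.2 = q.2 then 1 else 0))))) else 0 := by
    intro r
    simp only [Matrix.conjTranspose_apply, Matrix.of_apply]
    by_cases h1 : p.1 = p.2 <;> by_cases h2 : q.1 = q.2 <;> by_cases h3 : r.1 = r.2 <;>
      by_cases h4 : r.2 = p.2 <;> by_cases h5 : r.2 = q.2 <;>
      simp [h1, h2, h3, h4, h5] <;> ring
  rw [Finset.sum_congr rfl fun r _ => hL r, Finset.sum_congr rfl fun r _ => hR r]
  rw [sum_diag, sum_diag]
  rw [← Finset.mul_sum, ← Finset.mul_sum]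
  congr 1
  rw [g_sum n p.2 q.2]
  rw [← Finset.mul_sum, ind_sum n p.2 q.2]
  ring

lemma R0_psd (n : ℕ) (hn : 1 ≤ n) : (R0 n).PosSemidef := by
  have hd : ((2:ℝ)^n) ≠ 0 := by positivity
  have h2n : (2:ℝ) ≤ (2:ℝ)^n := by
    calc (2:ℝ) = 2^1 := (pow_one 2).symm
    _ ≤ 2^n := by
      apply pow_le_pow_right₀ (by norm_num) hn
  refine PosSemidef.of_dotProduct_mulVec_nonneg ?_ ?_
  · ext p q
    simp only [R0, Matrix.conjTranspose_apply, Matrix.of_apply]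
    by_cases hc : p.1 = p.2 ∧ q.1 = q.2
    · rw [if_pos (⟨hc.2, hc.1⟩ : q.1 = q.2 ∧ p.1 = p.2), if_pos hc]
      by_cases h2 : p.2 = q.2
      · rw [if_pos h2.symm, if_pos h2]
        simp [Complex.star_def, map_ofNat]
      · rw [if_neg (fun hh => h2 hh.symm), if_neg h2]
        simp [Complex.star_def, map_ofNat]
    · rw [if_neg (fun hh : q.1 = q.2 ∧ p.1 = p.2 => hc ⟨hh.2, hh.1⟩), if_neg hc, star_zero]
  · intro x
    rw [quad_expand]
    set b : ℂ := ((2:ℂ)^n - 2)/((2:ℂ)^n)^2 with hb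
    set g : ℂ := ((2:ℂ)^n)⁻¹ with hg
    have h1 : ∀ p q : Q n × Q n, star (x p) * R0 n p q * x q
        = b * ((if p.1 = p.2 then star (x p) else 0) * (if q.1 = q.2 then x q else 0))
          + g * (if p.1 = p.2 then
              (if q.1 = q.2 then (if p.2 = q.2 then star (x p) * x q else 0) else 0) else 0) := by
      intro p q
      simp only [R0, Matrix.of_apply]
      split_ifs <;> first | ring1 | simp_all
    rw [Finset.sum_congr rfl fun p _ => Finset.sum_congr rfl fun q _ => h1 p q]
    simp only [Finset.sum_add_distrib, ← Finset.mul_sum]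
    set t := ∑ a : Q n, x (a,a) with ht
    have e1 : ∑ p : Q n × Q n, ((if p.1 = p.2 then star (x p) else 0) *
          ∑ q : Q n × Q n, (if q.1 = q.2 then x q else 0)) = star t * t := by
      rw [← Finset.sum_mul, sum_diag (f := fun p => star (x p)), sum_diag (f := fun q => x q),
        star_sum]
    have epull : ∀ p : Q n × Q n, (∑ q : Q n × Q n, if p.1 = p.2 then
          (if q.1 = q.2 then (if p.2 = q.2 then star (x p) * x q else 0) else 0) else 0)
        = if p.1 = p.2 then (∑ q : Q n × Q n,
            (if q.1 = q.2 then (if p.2 = q.2 then star (x p) * x q else 0) else 0)) else 0 :=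
      fun p => by split_ifs <;> simp
    have e2 : ∑ p : Q n × Q n, ∑ q : Q n × Q n, (if p.1 = p.2 then
          (if q.1 = q.2 then (if p.2 = q.2 then star (x p) * x q else 0) else 0) else 0)
        = ∑ a : Q n, star (x (a,a)) * x (a,a) := by
      rw [Finset.sum_congr rfl fun p _ => epull p]
      rw [sum_diag (f := fun p => ∑ q : Q n × Q n,
        (if q.1 = q.2 then (if p.2 = q.2 then star (x p) * x q else 0) else 0))]
      refine Finset.sum_congr rfl fun a _ => ?_
      rw [sum_diag (f := fun q => (if a = q.2 then star (x (a,a)) * x q else 0))]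
      rw [Finset.sum_ite_eq Finset.univ a (fun c => star (x (a,a)) * x (c,c))]
      simp
    rw [e1, e2]
    have e3 : b * (star t * t) + g * (∑ a : Q n, star (x (a,a)) * x (a,a))
        = ((((2:ℝ)^n - 2)/((2:ℝ)^n)^2 * Complex.normSq t
            + ((2:ℝ)^n)⁻¹ * ∑ a : Q n, Complex.normSq (x (a,a)) : ℝ) : ℂ) := by
      have htt : star t * t = (Complex.normSq t : ℂ) := by
        rw [Complex.star_def, mul_comm, Complex.mul_conj]
      have hy : ∀ a : Q n, star (x (a,a)) * x (a,a) = (Complex.normSq (x (a,a)) : ℂ) := by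
        intro a
        rw [Complex.star_def, mul_comm, Complex.mul_conj]
      rw [htt, Finset.sum_congr rfl fun a _ => hy a, hb, hg]
      push_cast
      ring
    rw [e3, Complex.zero_le_real]
    have hb0 : (0:ℝ) ≤ ((2:ℝ)^n - 2)/((2:ℝ)^n)^2 := by
      apply div_nonneg (by linarith) (by positivity)
    have hsum0 : (0:ℝ) ≤ ∑ a : Q n, Complex.normSq (x (a,a)) :=
      Finset.sum_nonneg fun a _ => Complex.normSq_nonneg _
    exact add_nonneg (mul_nonneg hb0 (Complex.normSq_nonneg t))
      (mul_nonneg (by positivity) hsum0)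

lemma Y0_traceNorm (n : ℕ) (hn : 1 ≤ n) :
    traceNorm (tensorExt (fun X => X - measChanPow n X) (X0 n))
      = 2 * ((2:ℝ)^n - 1) / 2^n := by
  have hd : ((2:ℝ)^n) ≠ 0 := by positivity
  have hdC : ((2:ℂ)^n) ≠ 0 := by
    intro h
    exact two_ne_zero (pow_eq_zero_iff'.mp h).1
  rw [Y0_eq]
  rw [traceNorm_eq_of_sq (R0_psd n hn) (by rw [pow_two, RR_eq_YHY])]
  have htr : (R0 n).trace = (((2*(2:ℝ)^n - 2)/(2:ℝ)^n : ℝ) : ℂ) := by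
    rw [Matrix.trace]
    have h : ∀ p : Q n × Q n, (R0 n).diag p
        = if p.1 = p.2 then ((2:ℂ)^n - 2)/((2:ℂ)^n)^2 + ((2:ℂ)^n)⁻¹ else 0 := by
      intro p
      simp [R0, Matrix.diag]
    rw [Finset.sum_congr rfl fun p _ => h p,
      sum_diag (f := fun _ => ((2:ℂ)^n - 2)/((2:ℂ)^n)^2 + ((2:ℂ)^n)⁻¹)]
    rw [Finset.sum_const, Finset.card_univ, card_Q, nsmul_eq_mul]
    push_cast
    field_simp
    ring
  rw [htr, Complex.ofReal_re]
  field_simp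

lemma upper_bound (n : ℕ) (Y : Matrix (Q n × Q n) (Q n × Q n) ℂ) (hY : traceNorm Y ≤ 1) :
    traceNorm (tensorExt (fun X => X - measChanPow n X) Y) ≤ 2 * ((2:ℝ)^n - 1) / 2^n := by
  have hd : (0:ℝ) < 2^n := by positivity
  rw [rep, traceNorm_smul _ (by positivity) _]
  have hterm : ∀ s ∈ Finset.univ.erase (fun _ => 0 : Q n),
      traceNorm (Y - Matrix.diagonal (fun p : Q n × Q n => sgn n s p.2) * Y
        * Matrix.diagonal (fun p : Q n × Q n => sgn n s p.2)) ≤ 2 := by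
    intro s _
    have hconj := traceNorm_conj_diag (f := fun p : Q n × Q n => sgn n s p.2)
      (fun p => sgn_mul_self n s p.2) (fun p => star_sgn n s p.2) Y
    have h2 : traceNorm (Y - Matrix.diagonal (fun p : Q n × Q n => sgn n s p.2) * Y
          * Matrix.diagonal (fun p : Q n × Q n => sgn n s p.2))
        ≤ traceNorm Y + traceNorm (Matrix.diagonal (fun p : Q n × Q n => sgn n s p.2) * Y
          * Matrix.diagonal (fun p : Q n × Q n => sgn n s p.2)) := by
      rw [sub_eq_add_neg]
      refine (traceNorm_add_le _ _).trans ?_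
      rw [traceNorm_neg]
    rw [hconj] at h2
    linarith
  have hsum := traceNorm_sum_le (Finset.univ.erase (fun _ => 0 : Q n))
    (fun s => Y - Matrix.diagonal (fun p : Q n × Q n => sgn n s p.2) * Y
      * Matrix.diagonal (fun p : Q n × Q n => sgn n s p.2))
  have hcard : ((Finset.univ.erase (fun _ => 0 : Q n)).card : ℝ) = 2^n - 1 := by
    rw [Finset.card_erase_of_mem (Finset.mem_univ _), Finset.card_univ, card_Q]
    have h1 : (1:ℕ) ≤ 2^n := Nat.one_le_two_pow
    push_cast [Nat.cast_sub h1]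
    ring
  have hb : ∑ s ∈ Finset.univ.erase (fun _ => 0 : Q n),
      traceNorm (Y - Matrix.diagonal (fun p : Q n × Q n => sgn n s p.2) * Y
        * Matrix.diagonal (fun p : Q n × Q n => sgn n s p.2)) ≤ (2^n - 1) * 2 := by
    calc _ ≤ ∑ _s ∈ Finset.univ.erase (fun _ => 0 : Q n), (2:ℝ) := Finset.sum_le_sum hterm
      _ = ((Finset.univ.erase (fun _ => 0 : Q n)).card : ℝ) * 2 := by
          rw [Finset.sum_const, nsmul_eq_mul]
      _ = (2^n - 1) * 2 := by rw [hcard]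
  calc ((2:ℝ)^n)⁻¹ * traceNorm (∑ s ∈ Finset.univ.erase (fun _ => 0 : Q n),
        (Y - Matrix.diagonal (fun p : Q n × Q n => sgn n s p.2) * Y
          * Matrix.diagonal (fun p : Q n × Q n => sgn n s p.2)))
      ≤ ((2:ℝ)^n)⁻¹ * ((2^n - 1) * 2) := by
        exact mul_le_mul_of_nonneg_left (hsum.trans hb) (by positivity)
    _ = 2 * ((2:ℝ)^n - 1) / 2^n := by field_simp

end Meas

end DN

/-- `‖I − M^{⊗n}‖_◇ = 2(2ⁿ − 1)/2ⁿ`. -/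
theorem diamondNorm_id_sub_measPow (n : ℕ) :
    diamondNorm (fun X : Matrix (Fin n → Fin 2) (Fin n → Fin 2) ℂ => X - measChanPow n X)
      = 2 * ((2 : ℝ) ^ n - 1) / (2 : ℝ) ^ n := by
  rcases Nat.eq_zero_or_pos n with hn | hn
  · subst hn
    simp only [diamondNorm]
    have h0 : ∀ X : Matrix ((Fin 0 → Fin 2) × (Fin 0 → Fin 2))
        ((Fin 0 → Fin 2) × (Fin 0 → Fin 2)) ℂ,
        tensorExt (fun X : Matrix (Fin 0 → Fin 2) (Fin 0 → Fin 2) ℂ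
          => X - measChanPow 0 X) X = 0 := by
      intro X
      ext p q
      rw [DN.tensorExt_apply]
      have hpq : p.2 = q.2 := funext fun k => k.elim0
      simp [hpq]
    have hset : {r : ℝ | ∃ X : Matrix ((Fin 0 → Fin 2) × (Fin 0 → Fin 2))
          ((Fin 0 → Fin 2) × (Fin 0 → Fin 2)) ℂ, traceNorm X ≤ 1 ∧
          r = traceNorm (tensorExt (fun X : Matrix (Fin 0 → Fin 2) (Fin 0 → Fin 2) ℂ
            => X - measChanPow 0 X) X)} = {0} := by
      ext r
      simp only [Set.mem_setOf_eq, Set.mem_singleton_iff]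
      constructor
      · rintro ⟨X, _, rfl⟩
        rw [h0, DN.traceNorm_zero]
      · rintro rfl
        exact ⟨0, by rw [DN.traceNorm_zero]; norm_num, by rw [h0, DN.traceNorm_zero]⟩
    rw [hset, csSup_singleton]
    norm_num
  · have hn' : 1 ≤ n := hn
    simp only [diamondNorm]
    have hmem : 2 * ((2 : ℝ) ^ n - 1) / (2 : ℝ) ^ n ∈
        {r : ℝ | ∃ X : Matrix ((Fin n → Fin 2) × (Fin n → Fin 2))
          ((Fin n → Fin 2) × (Fin n → Fin 2)) ℂ, traceNorm X ≤ 1 ∧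
          r = traceNorm (tensorExt (fun X : Matrix (Fin n → Fin 2) (Fin n → Fin 2) ℂ
            => X - measChanPow n X) X)} :=
      ⟨DN.X0 n, le_of_eq (DN.X0_traceNorm n), (DN.Y0_traceNorm n hn').symm⟩
    have hub : ∀ r ∈ {r : ℝ | ∃ X : Matrix ((Fin n → Fin 2) × (Fin n → Fin 2))
          ((Fin n → Fin 2) × (Fin n → Fin 2)) ℂ, traceNorm X ≤ 1 ∧
          r = traceNorm (tensorExt (fun X : Matrix (Fin n → Fin 2) (Fin n → Fin 2) ℂ
            => X - measChanPow n X) X)}, r ≤ 2 * ((2 : ℝ) ^ n - 1) / (2 : ℝ) ^ n := by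
      rintro r ⟨X, hX, rfl⟩
      exact DN.upper_bound n X hX
    exact le_antisymm (csSup_le ⟨_, hmem⟩ hub) (le_csSup ⟨_, hub⟩ hmem)
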